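/- Suppose P(X = 0) < 1 and the probability generating function 𝒫 of the ℕ-valued random variable X satisfies, for all real u, v with 0 ≤ u ≤ 1 and 0 ≤ v ≤ 1, the functional equation 𝒫((1-p)u + pv)·(p𝒫(u) + (1-p)𝒫(v)) = 𝒫((1-p)u + p)·(p𝒫(u) + (1-p)) · 𝒫((1-p) + pv)·(p + (1-p)𝒫(v)). Then there exists a > 1 such that 𝒫(z) = (a-1)/(a-z) for all z ∈ [0,1]; equivalently, X is geometrically distributed with P(X = k) = (1 - 1/a)(1/a)^k for all k ∈ ℕ. -/

import Mathlib

/-!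
Write `F(u, v)` for the left-hand side of the functional equation. The right-hand side is a
product `φ(u) ψ(v)`, so `F ∂ᵤ∂ᵥF = ∂ᵤF ∂ᵥF`. On the diagonal `u = v = t`, where the argument
`(1 - p) t + p t` collapses to `t`, this identity reads `p (1 - p) 𝒫² (𝒫'' 𝒫 - 2 𝒫'²) = 0`.
Since `(1/𝒫)'' = -(𝒫'' 𝒫 - 2 𝒫'²) / 𝒫³`, the function `1/𝒫` is affine on `(0, 1)`, and the
endpoint values `𝒫(1) = 1` and `𝒫(0) = P(X = 0) < 1` pin it down to `(a - z) / (a - 1)`.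
Expanding `(a - 1) / (a - z)` as a geometric series and comparing power-series coefficients
then gives the distribution of `X`.
-/

open MeasureTheory ProbabilityTheory Set Filter Topology

section PowerSeries

open FormalMultilinearSeries

variable {q g : ℕ → ℝ}

theorem one_le_radius_ofScalars (hq : Summable q) : 1 ≤ (ofScalars ℝ q).radius := by
  obtain ⟨C, hC⟩ := hq.tendsto_atTop_zero.norm.bddAbove_range
  exact_mod_cast le_radius_of_bound _ C fun n => by simpa using hC ⟨n, rfl⟩

theorem hasFPowerSeriesOnBall_tsum_mul_pow (hq : Summable q) :
    HasFPowerSeriesOnBall (fun x => ∑' n, q n * x ^ n) (ofScalars ℝ q) 0 1 := by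
  have h := ((ofScalars ℝ q).hasFPowerSeriesOnBall
    (zero_lt_one.trans_le (one_le_radius_ofScalars hq))).mono one_pos (one_le_radius_ofScalars hq)
  convert h using 1
  ext x
  simp [FormalMultilinearSeries.sum, mul_comm]

theorem analyticOnNhd_tsum_mul_pow (hq : Summable q) :
    AnalyticOnNhd ℝ (fun x => ∑' n, q n * x ^ n) (Ioo (-1) 1) := by
  have hball : Metric.eball (0 : ℝ) 1 = Ioo (-1) 1 := by
    ext x
    simp [Metric.mem_eball, edist_dist, abs_lt]
  exact hball ▸ (hasFPowerSeriesOnBall_tsum_mul_pow hq).analyticOnNhd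

theorem continuousOn_tsum_mul_pow (hq : Summable fun n => ‖q n‖) :
    ContinuousOn (fun x => ∑' n, q n * x ^ n) (Icc (-1) 1) :=
  continuousOn_tsum (fun n => by fun_prop) hq fun n x hx => by
    simpa [abs_pow] using mul_le_of_le_one_right (abs_nonneg (q n))
      (pow_le_one₀ (abs_nonneg x) (abs_le.2 hx))

/-- The identity theorem propagates the equality from `(0, 1)` to a neighbourhood of `0`. -/
theorem eq_of_eqOn_Ioo_tsum_mul_pow (hq : Summable q) (hg : Summable g)
    (h : EqOn (fun x => ∑' n, q n * x ^ n) (fun x => ∑' n, g n * x ^ n) (Ioo 0 1)) :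
    q = g := by
  have hhalf : Ioo (0 : ℝ) 1 ∈ 𝓝 (1 / 2) := Ioo_mem_nhds (by norm_num) (by norm_num)
  have heq : EqOn (fun x => ∑' n, q n * x ^ n) (fun x => ∑' n, g n * x ^ n) (Ioo (-1) 1) :=
    (analyticOnNhd_tsum_mul_pow hq).eqOn_of_preconnected_of_frequently_eq
      (analyticOnNhd_tsum_mul_pow hg) isPreconnected_Ioo (by norm_num)
      (eventually_nhdsWithin_of_eventually_nhds (mem_of_superset hhalf h)).frequently
  have hq0 := (hasFPowerSeriesOnBall_tsum_mul_pow hq).hasFPowerSeriesAt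
  have hg0 := (hasFPowerSeriesOnBall_tsum_mul_pow hg).hasFPowerSeriesAt
  exact (ofScalars_series_eq_iff ℝ q g).1 <| hq0.eq_formalMultilinearSeries_of_eventually hg0
    (mem_of_superset (Ioo_mem_nhds (by norm_num) (by norm_num)) heq)

theorem tsum_geometric_mul_pow {a z : ℝ} (ha : 0 < a) (hz : |z| < a) :
    ∑' k : ℕ, (1 - 1 / a) * (1 / a) ^ k * z ^ k = (a - 1) / (a - z) := by
  have hza : |z / a| < 1 := by rwa [abs_div, abs_of_pos ha, div_lt_one ha]
  have hza' : a - z ≠ 0 := by linarith [le_abs_self z]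
  simp_rw [mul_assoc, ← mul_pow, one_div_mul_eq_div]
  rw [tsum_mul_left, tsum_geometric_of_abs_lt_one hza]
  field_simp

end PowerSeries

section GeneratingFunction

variable {Ω : Type*} [MeasurableSpace Ω] (μ : Measure Ω) {X : Ω → ℕ}

theorem summable_measureReal_preimage_singleton [IsFiniteMeasure μ] (hX : Measurable X) :
    Summable fun k : ℕ => μ.real {ω | X ω = k} := by
  refine ENNReal.summable_toReal (ne_of_eq_of_ne ?_ (measure_ne_top μ univ))
  show ∑' k : ℕ, μ (X ⁻¹' {k}) = μ univ
  rw [← measure_iUnion (fun i j hij => (disjoint_singleton.2 hij).preimage X)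
    (fun k => hX (measurableSet_singleton k)), ← preimage_iUnion, iUnion_of_singleton,
    preimage_univ]

theorem integral_pow_eq_tsum [IsFiniteMeasure μ] (hX : Measurable X) {t : ℝ} (ht : |t| ≤ 1) :
    ∫ ω, t ^ X ω ∂μ = ∑' k, μ.real {ω | X ω = k} * t ^ k := by
  have hint : Integrable (fun n : ℕ => t ^ n) (μ.map X) :=
    Integrable.of_bound measurable_from_nat.aestronglyMeasurable 1
      (Eventually.of_forall fun n => by simpa [abs_pow] using pow_le_one₀ (abs_nonneg t) ht)
  rw [← integral_map hX.aemeasurable hint.aestronglyMeasurable, integral_countable hint]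
  simp [map_measureReal_apply hX (measurableSet_singleton _)]
  rfl

theorem analyticOnNhd_integral_pow [IsFiniteMeasure μ] (hX : Measurable X) :
    AnalyticOnNhd ℝ (fun t : ℝ => ∫ ω, t ^ X ω ∂μ) (Ioo (-1) 1) :=
  (analyticOnNhd_tsum_mul_pow (summable_measureReal_preimage_singleton μ hX)).congr isOpen_Ioo
    fun _ ht => (integral_pow_eq_tsum μ hX (abs_le.2 ⟨ht.1.le, ht.2.le⟩)).symm

theorem continuousOn_integral_pow [IsFiniteMeasure μ] (hX : Measurable X) :
    ContinuousOn (fun t : ℝ => ∫ ω, t ^ X ω ∂μ) (Icc (-1) 1) :=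
  (continuousOn_tsum_mul_pow (summable_measureReal_preimage_singleton μ hX).abs).congr
    fun _ ht => integral_pow_eq_tsum μ hX (abs_le.2 ht)

theorem integral_zero_pow (hX : Measurable X) :
    ∫ ω, (0 : ℝ) ^ X ω ∂μ = μ.real {ω | X ω = 0} := by
  have h : (fun ω => (0 : ℝ) ^ X ω) = {ω | X ω = 0}.indicator 1 := by
    ext ω
    simp [indicator_apply, zero_pow_eq]
  rw [h]
  exact integral_indicator_one (hX (measurableSet_singleton 0))

theorem integral_pow_pos [IsFiniteMeasure μ] [NeZero μ] (hX : Measurable X) {t : ℝ}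
    (ht0 : 0 < t) (ht1 : t ≤ 1) : 0 < ∫ ω, t ^ X ω ∂μ := by
  have hint : Integrable (fun ω => t ^ X ω) μ :=
    Integrable.of_bound ((measurable_from_nat (f := (t ^ ·))).comp hX).aestronglyMeasurable 1
      (Eventually.of_forall fun ω => by simpa [abs_of_pos ht0] using pow_le_one₀ ht0.le ht1)
  rw [integral_pos_iff_support_of_nonneg (fun ω => by positivity) hint]
  simpa [Function.support, ht0.ne'] using NeZero.ne μ

theorem measureReal_preimage_singleton_eq_of_integral_pow_eqOn [IsFiniteMeasure μ]
    (hX : Measurable X) {g : ℕ → ℝ} (hg : Summable g)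
    (h : ∀ t ∈ Ioo (0 : ℝ) 1, ∫ ω, t ^ X ω ∂μ = ∑' k, g k * t ^ k) (k : ℕ) :
    μ.real {ω | X ω = k} = g k :=
  congrFun (eq_of_eqOn_Ioo_tsum_mul_pow (summable_measureReal_preimage_singleton μ hX) hg
    fun t ht => (integral_pow_eq_tsum μ hX (abs_le.2 ⟨by linarith [ht.1], ht.2.le⟩)).symm.trans
      (h t ht)) k

end GeneratingFunction

section SeparableProduct

variable {𝕜 : Type*} [NontriviallyNormedField 𝕜] {F Fu Fv Fuv : 𝕜 → 𝕜 → 𝕜} {φ ψ : 𝕜 → 𝕜}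
  {U V : Set 𝕜}

theorem mul_mixedPartial_eq_of_eq_mul (hU : IsOpen U) (hV : IsOpen V)
    (h : ∀ u ∈ U, ∀ v ∈ V, F u v = φ u * ψ v)
    (hFu : ∀ u ∈ U, ∀ v ∈ V, HasDerivAt (F · v) (Fu u v) u)
    (hFv : ∀ u ∈ U, ∀ v ∈ V, HasDerivAt (F u ·) (Fv u v) v)
    (hFuv : ∀ u ∈ U, ∀ v ∈ V, HasDerivAt (Fu u ·) (Fuv u v) v)
    {u v : 𝕜} (hu : u ∈ U) (hv : v ∈ V) :
    F u v * Fuv u v = Fu u v * Fv u v := by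
  have hFu_eq : ∀ y ∈ V, Fu u y = deriv φ u * ψ y := fun y hy => by
    rw [← (hFu u hu y hy).deriv, ← deriv_mul_const_field]
    exact EventuallyEq.deriv_eq (eventually_of_mem (hU.mem_nhds hu) fun x hx => h x hx y hy)
  have hFv_eq : Fv u v = φ u * deriv ψ v := by
    rw [← (hFv u hu v hv).deriv, ← deriv_const_mul_field]
    exact EventuallyEq.deriv_eq (eventually_of_mem (hV.mem_nhds hv) fun y hy => h u hu y hy)
  have hFuv_eq : Fuv u v = deriv φ u * deriv ψ v := by
    rw [← (hFuv u hu v hv).deriv, ← deriv_const_mul_field]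
    exact EventuallyEq.deriv_eq (eventually_of_mem (hV.mem_nhds hv) hFu_eq)
  rw [h u hu v hv, hFu_eq v hv, hFv_eq, hFuv_eq]
  ring

end SeparableProduct

section FunctionalEquation

variable {S S' S'' : ℝ → ℝ}

theorem mul_eq_two_mul_sq_of_mixture_eq_mul {p : ℝ} {φ ψ : ℝ → ℝ} (hp0 : 0 < p) (hp1 : p < 1)
    (hS : ∀ t ∈ Ioo 0 1, HasDerivAt S (S' t) t) (hS' : ∀ t ∈ Ioo 0 1, HasDerivAt S' (S'' t) t)
    (hne : ∀ t ∈ Ioo 0 1, S t ≠ 0)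
    (h : ∀ u ∈ Ioo 0 1, ∀ v ∈ Ioo 0 1,
      S ((1 - p) * u + p * v) * (p * S u + (1 - p) * S v) = φ u * ψ v)
    {t : ℝ} (ht : t ∈ Ioo 0 1) :
    S'' t * S t = 2 * S' t ^ 2 := by
  have hmix : ∀ u ∈ Ioo (0 : ℝ) 1, ∀ v ∈ Ioo (0 : ℝ) 1, (1 - p) * u + p * v ∈ Ioo (0 : ℝ) 1 :=
    fun u hu v hv => convex_Ioo 0 1 hu hv (by linarith) hp0.le (by ring)
  have hkey := mul_mixedPartial_eq_of_eq_mul isOpen_Ioo isOpen_Ioo h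
    (Fu := fun u v => (1 - p) * S' ((1 - p) * u + p * v) * (p * S u + (1 - p) * S v)
      + S ((1 - p) * u + p * v) * (p * S' u))
    (Fv := fun u v => p * S' ((1 - p) * u + p * v) * (p * S u + (1 - p) * S v)
      + S ((1 - p) * u + p * v) * ((1 - p) * S' v))
    (Fuv := fun u v => (1 - p) * (p * S'' ((1 - p) * u + p * v)) * (p * S u + (1 - p) * S v)
      + (1 - p) * S' ((1 - p) * u + p * v) * ((1 - p) * S' v)
      + p * S' ((1 - p) * u + p * v) * (p * S' u))
    (fun u hu v hv => by
      have hw := ((hasDerivAt_id u).const_mul (1 - p)).add_const (p * v)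
      exact (((hS _ (hmix u hu v hv)).comp u hw).mul
        (((hS u hu).const_mul p).add_const ((1 - p) * S v))).congr_deriv
        (by simp only [Function.comp_apply, id]; ring))
    (fun u hu v hv => by
      have hw := ((hasDerivAt_id v).const_mul p).const_add ((1 - p) * u)
      exact (((hS _ (hmix u hu v hv)).comp v hw).mul
        (((hS v hv).const_mul (1 - p)).const_add (p * S u))).congr_deriv
        (by simp only [Function.comp_apply, id]; ring))
    (fun u hu v hv => by
      have hw := ((hasDerivAt_id v).const_mul p).const_add ((1 - p) * u)
      have h1 := ((hS' _ (hmix u hu v hv)).comp v hw).const_mul (1 - p)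
      have h2 := (hS _ (hmix u hu v hv)).comp v hw
      exact ((h1.mul (((hS v hv).const_mul (1 - p)).const_add (p * S u))).add
        (h2.mul_const (p * S' u))).congr_deriv (by simp only [Function.comp_apply, id]; ring))
    ht ht
  have hdiag : (1 - p) * t + p * t = t := by ring
  simp only [hdiag] at hkey
  have hS2 : S t ^ 2 * (p * (1 - p)) ≠ 0 :=
    mul_ne_zero (pow_ne_zero 2 (hne t ht)) (mul_ne_zero hp0.ne' (by linarith))
  refine sub_eq_zero.1 ((mul_eq_zero.1 ?_).resolve_left hS2)
  linear_combination hkey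

theorem exists_inv_eq_affine_of_mul_eq_two_mul_sq {I : Set ℝ} (hI : IsOpen I)
    (hI' : IsPreconnected I) (hS : ∀ t ∈ I, HasDerivAt S (S' t) t)
    (hS' : ∀ t ∈ I, HasDerivAt S' (S'' t) t) (hne : ∀ t ∈ I, S t ≠ 0)
    (hode : ∀ t ∈ I, S'' t * S t = 2 * S' t ^ 2) :
    ∃ c d : ℝ, ∀ t ∈ I, (S t)⁻¹ = c * t + d := by
  have hinv : ∀ t ∈ I, HasDerivAt (fun x => (S x)⁻¹) (-S' t / S t ^ 2) t :=
    fun t ht => (hS t ht).inv (hne t ht)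
  have hinv' : ∀ t ∈ I, HasDerivAt (fun x => -S' x / S x ^ 2) 0 t := fun t ht => by
    simp only [neg_div]
    refine (((hS' t ht).div ((hS t ht).pow 2) (pow_ne_zero 2 (hne t ht))).neg).congr_deriv ?_
    rw [neg_eq_zero, div_eq_zero_iff]
    left
    norm_num
    linear_combination S t * hode t ht
  obtain ⟨c, hc⟩ := hI.exists_is_const_of_deriv_eq_zero hI'
    (fun t ht => (hinv' t ht).differentiableAt.differentiableWithinAt)
    (fun t ht => (hinv' t ht).deriv)
  obtain ⟨d, hd⟩ := hI.exists_eq_add_of_deriv_eq hI' (f := fun x => (S x)⁻¹) (g := (c * ·))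
    (fun t ht => (hinv t ht).differentiableAt.differentiableWithinAt)
    (differentiable_id.const_mul c).differentiableOn
    (fun t ht => by simp [(hinv t ht).deriv, hc t ht])
  exact ⟨c, d, hd⟩

theorem exists_eq_div_sub_of_inv_eq_affine {c d : ℝ} (hcont : ContinuousOn S (Icc 0 1))
    (hS1 : S 1 = 1) (hS0 : 0 ≤ S 0) (hS0' : S 0 < 1) (hne : ∀ t ∈ Ioo 0 1, S t ≠ 0)
    (hlin : ∀ t ∈ Ioo 0 1, (S t)⁻¹ = c * t + d) :
    ∃ a : ℝ, 1 < a ∧ ∀ z ∈ Icc 0 1, S z = (a - 1) / (a - z) := by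
  have hprod : EqOn (fun z => (c * z + d) * S z) 1 (Icc 0 1) :=
    EqOn.of_subset_closure (fun t ht => by simp [← hlin t ht, hne t ht])
      ((continuousOn_const.mul continuousOn_id).add continuousOn_const |>.mul hcont)
      continuousOn_const Ioo_subset_Icc_self (by rw [closure_Ioo zero_ne_one])
  have h1 : c + d = 1 := by simpa [hS1] using hprod ⟨zero_le_one, le_rfl⟩
  have h0 : d * S 0 = 1 := by simpa using hprod ⟨le_rfl, zero_le_one⟩
  have hS0pos : 0 < S 0 := hS0.lt_of_ne (by rintro h; simp [← h] at h0)
  have hd : 1 < d := by nlinarith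
  have ha : 1 < d / (d - 1) := by rw [lt_div_iff₀ (by linarith)]; linarith
  refine ⟨d / (d - 1), ha, fun z hz => ?_⟩
  have hSz : ((1 - d) * z + d) * S z = 1 := by simpa [← h1] using hprod hz
  rw [eq_div_iff (sub_pos.2 (hz.2.trans_lt ha)).ne']
  have hd1 : d - 1 ≠ 0 := by linarith
  field_simp
  linear_combination hSz

end FunctionalEquation

/-- If `P(X = 0) < 1` and the probability generating function `𝒫` of the `ℕ`-valued
random variable `X` satisfies the independence functional equation on `[0,1] × [0,1]`,
then there exists `a > 1` with `𝒫(z) = (a-1)/(a-z)` on `[0,1]`; equivalently, `X` is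
geometrically distributed with `P(X = k) = (1 - 1/a)(1/a)^k`. -/
theorem pgf_functional_equation_implies_geometric
    {Ω : Type*} [MeasurableSpace Ω] (μ : Measure Ω) [IsProbabilityMeasure μ]
    (p : ℝ) (hp0 : 0 < p) (hp1 : p < 1)
    (X : Ω → ℕ) (hXm : Measurable X)
    (hX0 : μ {ω | X ω = 0} < 1)
    (P : ℝ → ℝ) (hP : ∀ t : ℝ, P t = ∫ ω, t ^ X ω ∂μ)
    (hfe : ∀ u v : ℝ, 0 ≤ u → u ≤ 1 → 0 ≤ v → v ≤ 1 →
      P ((1 - p) * u + p * v) * (p * P u + (1 - p) * P v) =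
        P ((1 - p) * u + p) * (p * P u + (1 - p)) *
          (P ((1 - p) + p * v) * (p + (1 - p) * P v))) :
    ∃ a : ℝ, 1 < a ∧
      (∀ z : ℝ, 0 ≤ z → z ≤ 1 → P z = (a - 1) / (a - z)) ∧
      (∀ k : ℕ, μ {ω | X ω = k} = ENNReal.ofReal ((1 - 1 / a) * (1 / a) ^ k)) := by
  have hPX : P = fun t => ∫ ω, t ^ X ω ∂μ := funext hP
  have hPan : AnalyticOnNhd ℝ P (Ioo 0 1) :=
    hPX ▸ (analyticOnNhd_integral_pow μ hXm).mono (Ioo_subset_Ioo_left (by norm_num))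
  have hne : ∀ t ∈ Ioo (0 : ℝ) 1, P t ≠ 0 :=
    fun t ht => hP t ▸ (integral_pow_pos μ hXm ht.1 ht.2.le).ne'
  have hP' : ∀ t ∈ Ioo (0 : ℝ) 1, HasDerivAt P (deriv P t) t :=
    fun t ht => (hPan t ht).differentiableAt.hasDerivAt
  have hP'' : ∀ t ∈ Ioo (0 : ℝ) 1, HasDerivAt (deriv P) (deriv (deriv P) t) t :=
    fun t ht => (hPan.deriv t ht).differentiableAt.hasDerivAt
  obtain ⟨c, d, hlin⟩ := exists_inv_eq_affine_of_mul_eq_two_mul_sq isOpen_Ioo isPreconnected_Ioo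
    hP' hP'' hne fun t ht => mul_eq_two_mul_sq_of_mixture_eq_mul hp0 hp1 hP' hP'' hne
      (fun u hu v hv => hfe u v hu.1.le hu.2.le hv.1.le hv.2.le) ht
  have hP0 : P 0 = μ.real {ω | X ω = 0} := (hP 0).trans (integral_zero_pow μ hXm)
  obtain ⟨a, ha, hPa⟩ := exists_eq_div_sub_of_inv_eq_affine
    (hPX ▸ (continuousOn_integral_pow μ hXm).mono (Icc_subset_Icc_left (by norm_num)))
    (by simp [hP]) (hP0 ▸ measureReal_nonneg)
    (hP0 ▸ ENNReal.toReal_lt_of_lt_ofReal (by simpa using hX0)) hne hlin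
  refine ⟨a, ha, fun z hz0 hz1 => hPa z ⟨hz0, hz1⟩, fun k => ?_⟩
  rw [← ofReal_measureReal, measureReal_preimage_singleton_eq_of_integral_pow_eqOn μ hXm
    ((summable_geometric_of_lt_one (by positivity) ((div_lt_one (by linarith)).2 ha)).mul_left _)
    fun t ht => (hP t).symm.trans <| (hPa t (Ioo_subset_Icc_self ht)).trans
      (tsum_geometric_mul_pow (by linarith) (by rw [abs_of_pos ht.1]; linarith [ht.2])).symm]
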